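/- arXiv:1705.07017 — 2 statements merged into one kernel-verified Lean document; each statement's English description precedes it below -/
import Mathlib

section
/- Let Γ be a countable group acting continuously and topologically amenably on a compact Hausdorff space X, and let Δ ⊆ Γ be a subgroup. Then the restricted action of Δ on X is topologically amenable. In particular, the stabilizer in Γ of any point of X is an amenable group. -/
/-!
Fix a right transversal `T` of `Δ` in `Γ`; writing `γ = δ t` uniquely gives a retraction
`r : Γ → Δ` with `r (δ γ) = δ r(γ)`. Pushing the measures `μₙ(x)` forward along `r` is
`Δ`-equivariant and does not increase ℓ¹-distances, so it turns a topologically amenable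
`Γ`-family into a `Δ`-family. At a point `x` fixed by `Δ`, the measures `μₙ(x)` of a
topologically amenable `Δ`-action form a Reiter sequence for `Δ`.
-/

noncomputable section
open Filter Topology

/-- A probability measure on a countable set, seen as a nonnegative ℓ¹-function summing to 1. -/
def IsProbFn {K : Type*} (μ : K → ℝ) : Prop := (∀ k, 0 ≤ μ k) ∧ HasSum μ 1

/-- ℓ¹-distance between two measures on a countable set. -/
def l1dist {K : Type*} (μ ν : K → ℝ) : ℝ := ∑' k, |μ k - ν k|

/-- Pushforward of a measure under the action of a group element. -/
def pushAct {Γ K : Type*} [Group Γ] [MulAction Γ K] (γ : Γ) (μ : K → ℝ) : K → ℝ :=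
  fun k => μ (γ⁻¹ • k)

/-- Topological amenability of an action. -/
def TopAmenableAction (Γ X : Type*) [Group Γ] [TopologicalSpace X] [MulAction Γ X] : Prop :=
  ∃ μ : ℕ → X → Γ → ℝ,
    (∀ n x, IsProbFn (μ n x)) ∧
    (∀ n γ, Continuous fun x => μ n x γ) ∧
    ∀ γ : Γ, Tendsto (fun n => ⨆ x : X, l1dist (μ n (γ • x)) (pushAct γ (μ n x)))
      atTop (𝓝 0)

/-- Amenability of a countable group via a Reiter sequence. -/
def ReiterAmenable (Γ : Type*) [Group Γ] : Prop :=
  ∃ ν : ℕ → Γ → ℝ, (∀ n, IsProbFn (ν n)) ∧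
    ∀ γ : Γ, Tendsto (fun n => l1dist (pushAct γ (ν n)) (ν n)) atTop (𝓝 0)

section ProbFn

variable {K : Type*}

lemma IsProbFn.summable {μ : K → ℝ} (h : IsProbFn μ) : Summable μ := h.2.summable

lemma IsProbFn.pushAct {G : Type*} [Group G] [MulAction G K] {μ : K → ℝ} (h : IsProbFn μ)
    (g : G) : IsProbFn (pushAct g μ) :=
  ⟨fun _ => h.1 _, (MulAction.toPerm g⁻¹ : Equiv.Perm K).hasSum_iff.mpr h.2⟩

lemma l1dist_nonneg {μ ν : K → ℝ} : 0 ≤ l1dist μ ν :=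
  tsum_nonneg fun _ => abs_nonneg _

lemma l1dist_comm (μ ν : K → ℝ) : l1dist μ ν = l1dist ν μ :=
  tsum_congr fun _ => abs_sub_comm _ _

lemma l1dist_le_two {μ ν : K → ℝ} (hμ : IsProbFn μ) (hν : IsProbFn ν) : l1dist μ ν ≤ 2 := by
  have hbound : ∀ k, |μ k - ν k| ≤ μ k + ν k := fun k =>
    (abs_sub _ _).trans_eq <| by rw [abs_of_nonneg (hμ.1 k), abs_of_nonneg (hν.1 k)]
  have hsum : HasSum (fun k => μ k + ν k) 2 := by
    simpa [one_add_one_eq_two] using hμ.2.add hν.2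
  exact hsum.tsum_eq ▸
    (hμ.summable.sub hν.summable).abs.tsum_le_tsum hbound hsum.summable

lemma bddAbove_range_l1dist {ι : Type*} {μ ν : ι → K → ℝ} (hμ : ∀ i, IsProbFn (μ i))
    (hν : ∀ i, IsProbFn (ν i)) : BddAbove (Set.range fun i => l1dist (μ i) (ν i)) :=
  ⟨2, Set.forall_mem_range.mpr fun i => l1dist_le_two (hμ i) (hν i)⟩

end ProbFn

section Continuity

variable {X K : Type*} [TopologicalSpace X]

lemma lowerSemicontinuous_tsum_of_nonneg {f : X → K → ℝ} (hf₀ : ∀ x k, 0 ≤ f x k)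
    (hfs : ∀ x, Summable (f x)) (hc : ∀ k, Continuous fun x => f x k) :
    LowerSemicontinuous fun x => ∑' k, f x k := by
  intro x₀ y hy
  obtain ⟨T, hT⟩ := ((hfs x₀).hasSum.eventually (eventually_gt_nhds hy)).exists
  have hcT : Continuous fun x => ∑ k ∈ T, f x k := continuous_finsetSum T fun k _ => hc k
  filter_upwards [hcT.continuousAt.eventually (eventually_gt_nhds hT)] with x hx
  exact hx.trans_le ((hfs x).sum_le_tsum T fun k _ => hf₀ x k)

/-- The masses of `s` and of `sᶜ` are lower semicontinuous and add up to `1`. -/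
lemma continuous_tsum_subtype_of_isProbFn {f : X → K → ℝ} (hf : ∀ x, IsProbFn (f x))
    (hc : ∀ k, Continuous fun x => f x k) (s : Set K) :
    Continuous fun x => ∑' k : s, f x k := by
  have hlsc : ∀ t : Set K, LowerSemicontinuous fun x => ∑' k : t, f x k := fun t =>
    lowerSemicontinuous_tsum_of_nonneg (fun x k => (hf x).1 k)
      (fun x => (hf x).summable.subtype t) (fun k => hc k)
  have hcompl : ∀ x, ∑' k : s, f x k + ∑' k : ↥sᶜ, f x k = 1 := fun x =>
    (((hf x).summable.subtype s).tsum_add_tsum_compl ((hf x).summable.subtype sᶜ)).trans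
      (hf x).2.tsum_eq
  refine continuous_iff_lower_upperSemicontinuous.mpr ⟨hlsc s, fun x₀ y hy => ?_⟩
  filter_upwards [hlsc sᶜ x₀ (1 - y) (by linarith [hcompl x₀])] with x hx
  linarith [hcompl x]

end Continuity

section FiberSum

variable {A B : Type*}

def fiberSum (q : A → B) (μ : A → ℝ) (b : B) : ℝ := ∑' a : q ⁻¹' {b}, μ a

lemma HasSum.fiberSum (q : A → B) {μ : A → ℝ} {m : ℝ} (h : HasSum μ m) :
    HasSum (fiberSum q μ) m :=
  h.tsum_fiberwise q

lemma IsProbFn.fiberSum (q : A → B) {μ : A → ℝ} (h : IsProbFn μ) :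
    IsProbFn (fiberSum q μ) :=
  ⟨fun _ => tsum_nonneg fun _ => h.1 _, h.2.fiberSum q⟩

lemma l1dist_fiberSum_le (q : A → B) {μ ν : A → ℝ} (hμ : Summable μ) (hν : Summable ν) :
    l1dist (fiberSum q μ) (fiberSum q ν) ≤ l1dist μ ν := by
  have habs : Summable fun a => |μ a - ν a| := (hμ.sub hν).abs
  have hfib : HasSum (fiberSum q fun a => |μ a - ν a|) (l1dist μ ν) :=
    habs.hasSum.fiberSum q
  have hpointwise : ∀ b, |fiberSum q μ b - fiberSum q ν b|
      ≤ fiberSum q (fun a => |μ a - ν a|) b := fun b => by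
    have hsub : ∑' a : q ⁻¹' {b}, (μ a - ν a) = ∑' a : q ⁻¹' {b}, μ a - ∑' a : q ⁻¹' {b}, ν a :=
      (hμ.subtype _).tsum_sub (hν.subtype _)
    have hnorm : Summable fun a : q ⁻¹' {b} => ‖μ a - ν a‖ := habs.subtype _
    unfold fiberSum
    rw [← hsub]
    simpa only [Real.norm_eq_abs] using norm_tsum_le_tsum_norm hnorm
  calc l1dist (fiberSum q μ) (fiberSum q ν)
      ≤ ∑' b, fiberSum q (fun a => |μ a - ν a|) b :=
        Summable.tsum_le_tsum hpointwise
          (hfib.summable.of_nonneg_of_le (fun _ => abs_nonneg _) hpointwise) hfib.summable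
    _ = l1dist μ ν := hfib.tsum_eq

lemma fiberSum_pushAct {G : Type*} [Group G] [MulAction G A] [MulAction G B] {q : A → B}
    (hq : ∀ (g : G) a, q (g • a) = g • q a) (g : G) (μ : A → ℝ) :
    fiberSum q (pushAct g μ) = pushAct g (fiberSum q μ) := by
  funext b
  let e : q ⁻¹' {b} ≃ q ⁻¹' {g⁻¹ • b} := (MulAction.toPerm g⁻¹).subtypeEquiv fun a => by
    simp [hq]
  exact e.tsum_eq fun a => μ a

end FiberSum

section Amenability

variable {Γ X : Type*} [Group Γ] [TopologicalSpace X] [MulAction Γ X]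

theorem TopAmenableAction.subgroup (h : TopAmenableAction Γ X) (Δ : Subgroup Γ) :
    TopAmenableAction Δ X := by
  obtain ⟨μ, hprob, hcont, hlim⟩ := h
  obtain ⟨T, hT, -⟩ := Δ.exists_isComplement_right 1
  let r : Γ → Δ := fun γ => (hT.equiv γ).1
  have hr : ∀ (δ : Δ) (γ : Γ), r (δ • γ) = δ • r γ := fun δ γ =>
    congrArg Prod.fst (hT.equiv_mul_left δ γ)
  refine ⟨fun n x => fiberSum r (μ n x), fun n x => (hprob n x).fiberSum r,
    fun n d => continuous_tsum_subtype_of_isProbFn (hprob n) (hcont n) _, fun δ => ?_⟩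
  refine squeeze_zero (fun n => Real.iSup_nonneg fun x => l1dist_nonneg) (fun n => ?_) (hlim δ)
  refine ciSup_mono (bddAbove_range_l1dist (fun _ => hprob n _)
    (fun x => (hprob n x).pushAct (δ : Γ))) fun x => ?_
  rw [← fiberSum_pushAct hr]
  exact l1dist_fiberSum_le r (hprob n _).summable ((hprob n x).pushAct (δ : Γ)).summable

theorem TopAmenableAction.reiterAmenable_of_forall_smul_eq (h : TopAmenableAction Γ X) {x : X}
    (hx : ∀ γ : Γ, γ • x = x) : ReiterAmenable Γ := by
  obtain ⟨μ, hprob, -, hlim⟩ := h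
  refine ⟨fun n => μ n x, fun n => hprob n x, fun γ => ?_⟩
  refine squeeze_zero (fun n => l1dist_nonneg) (fun n => ?_) (hlim γ)
  calc l1dist (pushAct γ (μ n x)) (μ n x) = l1dist (μ n (γ • x)) (pushAct γ (μ n x)) := by
        rw [hx, l1dist_comm]
    _ ≤ ⨆ y, l1dist (μ n (γ • y)) (pushAct γ (μ n y)) :=
        le_ciSup (bddAbove_range_l1dist (fun _ => hprob n _) fun y => (hprob n y).pushAct γ) x

end Amenability

theorem restricted_action_topologically_amenable_general
    {Γ X : Type*} [Group Γ]
    [TopologicalSpace X] [MulAction Γ X]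
    (h : TopAmenableAction Γ X) (Δ : Subgroup Γ) :
    TopAmenableAction ↥Δ X ∧ ∀ x : X, ReiterAmenable ↥(MulAction.stabilizer Γ x) :=
  ⟨h.subgroup Δ, fun x => (h.subgroup _).reiterAmenable_of_forall_smul_eq (x := x) fun γ => γ.2⟩

/-- if a countable group `Γ` acts continuously and topologically amenably on a
compact Hausdorff space `X`, then the restricted action of any subgroup `Δ ≤ Γ` is
topologically amenable; in particular the stabilizer of every point of `X` is amenable. -/
theorem restricted_action_topologically_amenable
    {Γ X : Type*} [Group Γ] [Countable Γ]
    [TopologicalSpace X] [CompactSpace X] [T2Space X] [MulAction Γ X]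
    (h : TopAmenableAction Γ X) (Δ : Subgroup Γ) :
    TopAmenableAction ↥Δ X ∧ ∀ x : X, ReiterAmenable ↥(MulAction.stabilizer Γ x) :=
  restricted_action_topologically_amenable_general h Δ
end
end

section
/- Let A and B be groups with B nontrivial, and let G = A ∗ B be their free product. For a ∈ A, let φ_a ∈ Aut(G) be the automorphism acting as conjugation by a on A and as the identity on B. Then the resulting homomorphism A → Out(G), a ↦ [φ_a], has kernel exactly the center Z(A). Consequently A/Z(A) embeds into Out(A ∗ B). -/
/-!
If `g * partialConj b x * g⁻¹ = partialConj a x` for all `x`, then `g` commutes with the factor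
`B`, which both automorphisms fix. Projecting onto `A` (killing `B`) turns the identity on `A`
into `fst g * (b * x * b⁻¹) * (fst g)⁻¹ = a * x * a⁻¹`, so it suffices to show `fst g = 1`.

For this let `A ∗ B` act on `A × B`: `A` by left translation of the first coordinate, `B` by
left translation of the second coordinate over the point `1 : A` only. The first coordinate then
moves by `fst g`. If `fst g ≠ 1`, then `g` carries `(1, 1)` and `(1, y)` to points outside the
fibre over `1`, where `y ∈ B` acts trivially; so `g` commuting with `y` forces `y = 1`. Since `B`
is nontrivial, `fst g = 1`.
-/

noncomputable section

/-- The automorphism of the free product `A ∗ B` acting as conjugation by `a` on the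
factor `A` and as the identity on the factor `B` (as a monoid homomorphism). -/
def partialConj {A B : Type*} [Group A] [Group B] (a : A) :
    Monoid.Coprod A B →* Monoid.Coprod A B :=
  Monoid.Coprod.lift
    ((MulAut.conj (Monoid.Coprod.inl a)).toMonoidHom.comp Monoid.Coprod.inl)
    Monoid.Coprod.inr

namespace Monoid.Coprod

open Equiv

variable {A B : Type*} [Group A] [Group B]

def translateFst : A →* Perm (A × B) where
  toFun x := prodCongr (Equiv.mulLeft x) (Equiv.refl B)
  map_one' := by ext <;> simp
  map_mul' x x' := by ext <;> simp [mul_assoc]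

open scoped Classical in
def translateSndOverOne : B →* Perm (A × B) where
  toFun y := Perm.prodExtendRight 1 (Equiv.mulLeft y)
  map_one' := by
    ext ⟨t, s⟩ : 1
    by_cases ht : t = 1 <;> simp [Perm.prodExtendRight, ht]
  map_mul' y y' := by
    ext ⟨t, s⟩ : 1
    by_cases ht : t = 1 <;> simp [Perm.prodExtendRight, ht]

def actOnProd : A ∗ B →* Perm (A × B) := lift translateFst translateSndOverOne

theorem actOnProd_apply_fst (g : A ∗ B) (p : A × B) : (actOnProd g p).1 = fst g * p.1 := by
  induction g using Monoid.Coprod.induction_on generalizing p with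
  | inl x => rfl
  | inr y =>
    by_cases hp : p.1 = 1 <;> simp [actOnProd, translateSndOverOne, Perm.prodExtendRight, hp]
  | mul g h hg hh => simp [hg, hh, mul_assoc]

theorem actOnProd_inr_apply_one (y s : B) : actOnProd (inr y) ((1 : A), s) = (1, y * s) := by
  simp [actOnProd, translateSndOverOne, Perm.prodExtendRight]

theorem actOnProd_inr_of_fst_ne_one (y : B) {p : A × B} (hp : p.1 ≠ 1) :
    actOnProd (inr y) p = p := by
  simp [actOnProd, translateSndOverOne, Perm.prodExtendRight, hp]

theorem fst_eq_one_of_forall_commute_inr [Nontrivial B] {g : A ∗ B}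
    (hg : ∀ y : B, Commute g (inr y)) : fst g = 1 := by
  by_contra hne
  obtain ⟨y, hy⟩ := exists_ne (1 : B)
  have hmoved : (actOnProd g (1, 1)).1 ≠ 1 := by simpa [actOnProd_apply_fst] using hne
  have hfix : actOnProd g (1, y) = actOnProd g (1, 1) := by
    calc actOnProd g (1, y) = actOnProd (g * inr y) (1, 1) := by
          rw [map_mul, Perm.mul_apply, actOnProd_inr_apply_one, mul_one]
      _ = actOnProd (inr y) (actOnProd g (1, 1)) := by rw [(hg y).eq, map_mul, Perm.mul_apply]
      _ = actOnProd g (1, 1) := actOnProd_inr_of_fst_ne_one y hmoved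
  exact hy (congrArg Prod.snd ((actOnProd g).injective hfix))

end Monoid.Coprod

open Monoid.Coprod

section PartialConj

variable {A B : Type*} [Group A] [Group B]

@[simp]
theorem partialConj_inr (a : A) (y : B) : partialConj a (inr y) = inr y :=
  lift_apply_inr _ _ _

@[simp]
theorem fst_partialConj (a : A) (x : A ∗ B) : fst (partialConj a x) = a * fst x * a⁻¹ := by
  induction x using Monoid.Coprod.induction_on with
  | inl x => simp [partialConj]
  | inr y => simp
  | mul x x' hx hx' => simp [hx, hx', mul_assoc]

theorem partialConj_of_mem_center {a : A} (ha : a ∈ Subgroup.center A) (x : A ∗ B) :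
    partialConj a x = x := by
  suffices partialConj (B := B) a = MonoidHom.id _ from DFunLike.congr_fun this x
  refine Monoid.Coprod.hom_ext (MonoidHom.ext fun x => ?_) (MonoidHom.ext fun y => ?_)
  · simp [partialConj, ← map_mul, ← map_inv, (Subgroup.mem_center_iff.mp ha x).symm]
  · simp

theorem inv_mul_mem_center_of_partialConj_eq_conj [Nontrivial B] {a b : A} {g : A ∗ B}
    (hg : ∀ x, partialConj a x = g * partialConj b x * g⁻¹) :
    b⁻¹ * a ∈ Subgroup.center A := by
  have hcomm (y : B) : Commute g (inr y) :=
    (by simpa [eq_mul_inv_iff_mul_eq, eq_comm] using hg (inr y) : g * inr y = inr y * g)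
  have hfst := fst_eq_one_of_forall_commute_inr hcomm
  refine Subgroup.mem_center_iff.mpr fun x => ?_
  have hx := congrArg fst (hg (inl x))
  simp only [fst_partialConj, map_mul, map_inv, hfst, fst_apply_inl, one_mul, inv_one,
    mul_one] at hx
  calc x * (b⁻¹ * a) = b⁻¹ * (b * x * b⁻¹) * a := by group
    _ = b⁻¹ * a * x := by rw [← hx]; group

end PartialConj

/-- for `G = A ∗ B` with `B` nontrivial, the homomorphism `A → Out(G)`,
`a ↦ [φ_a]`, has kernel exactly the center of `A`: `φ_a` is inner iff `a ∈ Z(A)`.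
Consequently the induced map from `A` modulo its center is injective, i.e.
`A/Z(A)` embeds into `Out(A ∗ B)`. -/
theorem partialConj_inner_iff_center {A B : Type*} [Group A] [Group B] [Nontrivial B] :
    (∀ a : A,
      (∃ g : Monoid.Coprod A B, ∀ x : Monoid.Coprod A B,
          partialConj (B := B) a x = g * x * g⁻¹)
        ↔ a ∈ Subgroup.center A) ∧
    (∀ a b : A,
      (∃ g : Monoid.Coprod A B, ∀ x : Monoid.Coprod A B,
          partialConj (B := B) a x = g * partialConj (B := B) b x * g⁻¹) →
        b⁻¹ * a ∈ Subgroup.center A) := by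
  refine ⟨fun a => ⟨fun ⟨g, hg⟩ => ?_, fun ha => ⟨1, fun x => ?_⟩⟩,
    fun a b ⟨g, hg⟩ => inv_mul_mem_center_of_partialConj_eq_conj hg⟩
  · simpa using inv_mul_mem_center_of_partialConj_eq_conj (a := a) (b := 1) (g := g) fun x => by
      rw [partialConj_of_mem_center (Subgroup.one_mem _)]
      exact hg x
  · simp [partialConj_of_mem_center ha]
end
end
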